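/- arXiv:2510.06115 — 3 statements merged into one kernel-verified Lean document; each statement's English description precedes it below -/
import Mathlib

section
/- Let f : M → ℝ be self-concordant on an open convex set M ⊆ ℝⁿ, with minimizer z ∈ M and f(z) = 0, and let ‖·‖_z be the local norm induced by the Hessian at z. If ‖x - z‖_z < 1, then f(x) ≥ ¼‖x - z‖_z²; consequently, by convexity, f(x) ≥ ¼ whenever ‖x - z‖_z ≥ 1. -/
/-- The Hessian quadratic/bilinear form `D²f_x[u,v]` via the second iterated Fréchet
derivative. -/
noncomputable def hessBilin {n : ℕ} (f : (Fin n → ℝ) → ℝ) (x u v : Fin n → ℝ) : ℝ :=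
  iteratedFDeriv ℝ 2 f x ![u, v]

/-!
Along the segment `s ↦ z + s • (x - z)` the second derivative `A s` of `f` satisfies
`|A'| ≤ 2 A^{3/2}`, so `A^{-1/2}` grows at most linearly and `A s ≥ t² / (1 + t s)²`, where
`t = ‖x - z‖_z`. As `f z = 0` and `∇f z = 0`, comparing with the solution of
`h'' = t² / (1 + t s)³` gives `f x ≥ t² / (2 (1 + t)) ≥ t² / 4` when `t < 1`. When `t ≥ 1`, the
point of local norm `r < 1` on the segment and convexity give `r² / 4 ≤ (r / t) f x`, so
`f x ≥ r / 4` for every `r < 1`.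
-/

open Set

theorem hessBilin_smul {n : ℕ} (f : (Fin n → ℝ) → ℝ) (x w : Fin n → ℝ) (a : ℝ) :
    hessBilin f x (a • w) (a • w) = a ^ 2 * hessBilin f x w w := by
  have h : ![a • w, a • w] = fun i => (fun _ : Fin 2 => a) i • ![w, w] i := by
    funext i; fin_cases i <;> rfl
  rw [hessBilin, h, ContinuousMultilinearMap.map_smul_univ]
  simp [hessBilin, sq]

theorem hessBilin_zero {n : ℕ} (f : (Fin n → ℝ) → ℝ) (x : Fin n → ℝ) :
    hessBilin f x 0 0 = 0 :=
  ContinuousMultilinearMap.map_coord_zero _ (0 : Fin 2) rfl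

theorem le_on_Icc_of_hasDerivAt_le {g g' h h' : ℝ → ℝ} {a b : ℝ}
    (hg : ∀ s ∈ Icc a b, HasDerivAt g (g' s) s) (hh : ∀ s ∈ Icc a b, HasDerivAt h (h' s) s)
    (hle : ∀ s ∈ Ioo a b, h' s ≤ g' s) (ha : h a ≤ g a) : ∀ s ∈ Icc a b, h s ≤ g s := by
  have hd : ∀ s ∈ Icc a b, HasDerivAt (fun s => g s - h s) (g' s - h' s) s :=
    fun s hs => (hg s hs).sub (hh s hs)
  have hmono : MonotoneOn (fun s => g s - h s) (Icc a b) := by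
    refine monotoneOn_of_hasDerivWithinAt_nonneg (f' := fun s => g' s - h' s) (convex_Icc a b)
      (fun s hs => (hd s hs).continuousAt.continuousWithinAt) (fun s hs => ?_) (fun s hs => ?_)
    · rw [interior_Icc] at hs ⊢
      exact (hd s (Ioo_subset_Icc_self hs)).hasDerivWithinAt
    · rw [interior_Icc] at hs
      exact sub_nonneg.2 (hle s hs)
  intro s hs
  have := hmono (left_mem_Icc.2 (hs.1.trans hs.2)) hs hs.1
  linarith

theorem le_on_Icc_of_second_deriv_le {g g' g'' h h' h'' : ℝ → ℝ} {a b : ℝ}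
    (hg : ∀ s ∈ Icc a b, HasDerivAt g (g' s) s) (hg' : ∀ s ∈ Icc a b, HasDerivAt g' (g'' s) s)
    (hh : ∀ s ∈ Icc a b, HasDerivAt h (h' s) s) (hh' : ∀ s ∈ Icc a b, HasDerivAt h' (h'' s) s)
    (hle : ∀ s ∈ Ioo a b, h'' s ≤ g'' s) (ha : h a ≤ g a) (ha' : h' a ≤ g' a) :
    ∀ s ∈ Icc a b, h s ≤ g s :=
  le_on_Icc_of_hasDerivAt_le hg hh
    (fun s hs => le_on_Icc_of_hasDerivAt_le hg' hh' hle ha' s (Ioo_subset_Icc_self hs)) ha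

section SelfConcordantSegment

variable {A A' : ℝ → ℝ} {b : ℝ}

theorem rpow_neg_half_le_add (hA : ∀ s ∈ Icc 0 b, HasDerivAt A (A' s) s)
    (hpos : ∀ s ∈ Icc 0 b, 0 < A s)
    (hsc : ∀ s ∈ Icc 0 b, -(2 * A s ^ ((3 : ℝ) / 2)) ≤ A' s) :
    ∀ s ∈ Icc 0 b, A s ^ (-(1 / 2) : ℝ) ≤ A 0 ^ (-(1 / 2) : ℝ) + s := by
  refine le_on_Icc_of_hasDerivAt_le (g' := fun _ => 1)
    (fun s _ => by simpa using (hasDerivAt_id s).const_add (A 0 ^ (-(1 / 2) : ℝ)))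
    (fun s hs => (Real.hasDerivAt_rpow_const (Or.inl (hpos s hs).ne')).comp s (hA s hs))
    (fun s hs => ?_) (by simp)
  have ha := hpos s (Ioo_subset_Icc_self hs)
  have hinv : A s ^ ((-(1 / 2) : ℝ) - 1) * A s ^ ((3 : ℝ) / 2) = 1 := by
    rw [← Real.rpow_add ha]; norm_num
  nlinarith [hsc s (Ioo_subset_Icc_self hs), Real.rpow_pos_of_pos ha ((-(1 / 2) : ℝ) - 1)]

theorem div_one_add_sqrt_mul_sq_le (hA : ∀ s ∈ Icc 0 b, HasDerivAt A (A' s) s)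
    (hpos : ∀ s ∈ Icc 0 b, 0 < A s)
    (hsc : ∀ s ∈ Icc 0 b, -(2 * A s ^ ((3 : ℝ) / 2)) ≤ A' s) :
    ∀ s ∈ Icc 0 b, A 0 / (1 + √(A 0) * s) ^ 2 ≤ A s := by
  intro s hs
  have hb : 0 ≤ b := hs.1.trans hs.2
  have hroot : ∀ r ∈ Icc 0 b, A r ^ (-(1 / 2) : ℝ) = (√(A r))⁻¹ := fun r hr => by
    rw [Real.sqrt_eq_rpow, ← Real.rpow_neg (hpos r hr).le]
  have h := rpow_neg_half_le_add hA hpos hsc s hs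
  rw [hroot s hs, hroot 0 (left_mem_Icc.2 hb)] at h
  have hp := Real.sqrt_pos.2 (hpos s hs)
  have hq := Real.sqrt_pos.2 (hpos 0 (left_mem_Icc.2 hb))
  have hlin : √(A 0) ≤ √(A s) * (1 + √(A 0) * s) := by
    rw [inv_le_iff_one_le_mul₀' hp] at h
    field_simp at h
    nlinarith
  have hsq := pow_le_pow_left₀ hq.le hlin 2
  rw [mul_pow, Real.sq_sqrt (hpos s hs).le, Real.sq_sqrt (hpos 0 (left_mem_Icc.2 hb)).le] at hsq
  rwa [div_le_iff₀ (by have := hs.1; positivity)]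

end SelfConcordantSegment

/-- Solves `h'' = t² / (1 + t s)³`, `h 0 = h' 0 = 0`; comparing with the sharper bound
`t² / (1 + t s)²` itself would bring in a logarithm. -/
noncomputable def scMinorant (t s : ℝ) : ℝ := t ^ 2 * s ^ 2 / (2 * (1 + t * s))

noncomputable def scMinorantDeriv (t s : ℝ) : ℝ :=
  (2 * t ^ 2 * s + t ^ 3 * s ^ 2) / (2 * (1 + t * s) ^ 2)

theorem hasDerivAt_scMinorant {t s : ℝ} (hts : 1 + t * s ≠ 0) :
    HasDerivAt (scMinorant t) (scMinorantDeriv t s) s := by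
  have hnum : HasDerivAt (fun s => t ^ 2 * s ^ 2) (t ^ 2 * (2 * s)) s := by
    simpa using (hasDerivAt_pow 2 s).const_mul (t ^ 2)
  have hden : HasDerivAt (fun s => 2 * (1 + t * s)) (2 * t) s := by
    simpa using (((hasDerivAt_id s).const_mul t).const_add 1).const_mul 2
  refine (hnum.div hden (by simpa using hts)).congr_deriv ?_
  rw [scMinorantDeriv]
  field_simp
  ring

theorem hasDerivAt_scMinorantDeriv {t s : ℝ} (hts : 1 + t * s ≠ 0) :
    HasDerivAt (scMinorantDeriv t) (t ^ 2 / (1 + t * s) ^ 3) s := by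
  have hnum : HasDerivAt (fun s => 2 * t ^ 2 * s + t ^ 3 * s ^ 2)
      (2 * t ^ 2 + t ^ 3 * (2 * s)) s :=
    (((hasDerivAt_id s).const_mul (2 * t ^ 2)).add
      ((hasDerivAt_pow 2 s).const_mul (t ^ 3))).congr_deriv (by simp)
  have hden : HasDerivAt (fun s => 2 * (1 + t * s) ^ 2) (2 * (2 * (1 + t * s) * t)) s := by
    simpa [mul_comm, mul_assoc, mul_left_comm] using
      ((((hasDerivAt_id s).const_mul t).const_add 1).pow 2).const_mul 2
  refine (hnum.div hden (by simpa using hts)).congr_deriv ?_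
  field_simp
  ring

theorem add_div_two_mul_one_add_sqrt_le {φ φ' A A' : ℝ → ℝ}
    (hφ : ∀ s ∈ Icc 0 1, HasDerivAt φ (φ' s) s) (hφ' : ∀ s ∈ Icc 0 1, HasDerivAt φ' (A s) s)
    (hA : ∀ s ∈ Icc 0 1, HasDerivAt A (A' s) s) (hpos : ∀ s ∈ Icc 0 1, 0 < A s)
    (hsc : ∀ s ∈ Icc 0 1, -(2 * A s ^ ((3 : ℝ) / 2)) ≤ A' s) (hφ'0 : φ' 0 = 0) :
    φ 0 + A 0 / (2 * (1 + √(A 0))) ≤ φ 1 := by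
  have hA0 : √(A 0) ^ 2 = A 0 := Real.sq_sqrt (hpos 0 (left_mem_Icc.2 zero_le_one)).le
  have hden : ∀ s ∈ Icc (0 : ℝ) 1, 1 ≤ 1 + √(A 0) * s := fun s hs => by
    have := hs.1; simp only [le_add_iff_nonneg_right]; positivity
  have hcmp := le_on_Icc_of_second_deriv_le hφ hφ' (h := fun s => φ 0 + scMinorant √(A 0) s)
    (fun s hs => (hasDerivAt_scMinorant (by linarith [hden s hs])).const_add (φ 0))
    (fun s hs => hasDerivAt_scMinorantDeriv (by linarith [hden s hs]))
    (fun s hs => ?_) (by simp [scMinorant]) (by simp [scMinorantDeriv, hφ'0])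
    1 (right_mem_Icc.2 zero_le_one)
  · simpa [scMinorant, hA0] using hcmp
  have hs' := Ioo_subset_Icc_self hs
  calc √(A 0) ^ 2 / (1 + √(A 0) * s) ^ 3 ≤ √(A 0) ^ 2 / (1 + √(A 0) * s) ^ 2 := by
        have h1 := hden s hs'
        exact div_le_div_of_nonneg_left (sq_nonneg _) (by positivity)
          (pow_le_pow_right₀ h1 (by norm_num))
    _ ≤ A s := by
        rw [hA0]; exact div_one_add_sqrt_mul_sq_le hA hpos hsc s hs'

section LineDerivatives

variable {n : ℕ} {f : (Fin n → ℝ) → ℝ} {z u : Fin n → ℝ} {s : ℝ}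

theorem hasDerivAt_line {E : Type*} [NormedAddCommGroup E] [NormedSpace ℝ E] (z u : E) (s : ℝ) :
    HasDerivAt (fun s : ℝ => z + s • u) u s := by
  simpa using ((hasDerivAt_id s).smul_const u).const_add z

theorem hasDerivAt_apply_line (hf : DifferentiableAt ℝ f (z + s • u)) :
    HasDerivAt (fun s : ℝ => f (z + s • u)) (fderiv ℝ f (z + s • u) u) s :=
  hf.hasFDerivAt.comp_hasDerivAt s (hasDerivAt_line z u s)

theorem hasDerivAt_fderiv_apply_line (hf : ContDiffAt ℝ 2 f (z + s • u)) :
    HasDerivAt (fun s : ℝ => fderiv ℝ f (z + s • u) u) (hessBilin f (z + s • u) u u) s := by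
  have hf' : ContDiffAt ℝ 1 (fderiv ℝ f) (z + s • u) := hf.fderiv_right (by norm_num)
  have hdf := hf'.differentiableAt one_ne_zero
  have h := (ContinuousLinearMap.apply ℝ ℝ u).hasFDerivAt.comp_hasDerivAt s
    (hdf.hasFDerivAt.comp_hasDerivAt s (hasDerivAt_line z u s))
  have he : hessBilin f (z + s • u) u u = fderiv ℝ (fderiv ℝ f) (z + s • u) u u := by
    simp [hessBilin, iteratedFDeriv_two_apply]
  rw [he]
  exact h

theorem hasDerivAt_hessBilin_line (hf : ContDiffAt ℝ 3 f (z + s • u)) :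
    HasDerivAt (fun s : ℝ => hessBilin f (z + s • u) u u)
      (iteratedFDeriv ℝ 3 f (z + s • u) (fun _ => u)) s := by
  have hf' : ContDiffAt ℝ 1 (iteratedFDeriv ℝ 2 f) (z + s • u) :=
    hf.iteratedFDeriv_right (by norm_num)
  have hdf := hf'.differentiableAt one_ne_zero
  have h := (ContinuousMultilinearMap.apply ℝ (fun _ : Fin 2 => Fin n → ℝ) ℝ ![u, u]).hasFDerivAt
    |>.comp_hasDerivAt s (hdf.hasFDerivAt.comp_hasDerivAt s (hasDerivAt_line z u s))
  have hu : (fun _ : Fin 3 => u) = Matrix.vecCons u ![u, u] := by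
    funext i; fin_cases i <;> rfl
  rw [hu, iteratedFDeriv_succ_apply_left]
  exact h

end LineDerivatives

section LocalNormBounds

variable {n : ℕ} {M : Set (Fin n → ℝ)} {f : (Fin n → ℝ) → ℝ} {z x : Fin n → ℝ}

theorem quarter_hessBilin_le (hM : IsOpen M) (hMconv : Convex ℝ M)
    (hf : ∀ x ∈ M, ContDiffAt ℝ 3 f x)
    (hpd : ∀ x ∈ M, ∀ u : Fin n → ℝ, u ≠ 0 → 0 < hessBilin f x u u)
    (hsc : ∀ x ∈ M, ∀ u : Fin n → ℝ,
      |iteratedFDeriv ℝ 3 f x (fun _ => u)| ≤ 2 * hessBilin f x u u ^ ((3 : ℝ) / 2))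
    (hz : z ∈ M) (hmin : ∀ x ∈ M, f z ≤ f x) (hfz : f z = 0) (hx : x ∈ M)
    (hlt : √(hessBilin f z (x - z) (x - z)) < 1) :
    1 / 4 * hessBilin f z (x - z) (x - z) ≤ f x := by
  obtain rfl | hxz := eq_or_ne x z
  · simp [hessBilin_zero, hfz]
  have hseg : ∀ s ∈ Icc (0 : ℝ) 1, z + s • (x - z) ∈ M :=
    fun s hs => hMconv.add_smul_sub_mem hz hx hs
  have hcrit : fderiv ℝ f z = 0 :=
    IsLocalMin.fderiv_eq_zero (Filter.eventually_of_mem (hM.mem_nhds hz) hmin)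
  have key := add_div_two_mul_one_add_sqrt_le
    (fun s hs => hasDerivAt_apply_line ((hf _ (hseg s hs)).differentiableAt (by norm_num)))
    (fun s hs => hasDerivAt_fderiv_apply_line ((hf _ (hseg s hs)).of_le (by norm_num)))
    (fun s hs => hasDerivAt_hessBilin_line (hf _ (hseg s hs)))
    (fun s hs => hpd _ (hseg s hs) _ (sub_ne_zero.2 hxz))
    (fun s hs => neg_le_of_abs_le (hsc _ (hseg s hs) _)) (by simp [hcrit])
  simp only [zero_smul, add_zero, one_smul, add_sub_cancel, hfz, zero_add] at key
  calc 1 / 4 * hessBilin f z (x - z) (x - z)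
      = hessBilin f z (x - z) (x - z) / (2 * 2) := by ring
    _ ≤ hessBilin f z (x - z) (x - z) / (2 * (1 + √(hessBilin f z (x - z) (x - z)))) := by
      have hQ := hpd z hz _ (sub_ne_zero.2 hxz)
      gcongr
      linarith
    _ ≤ f x := key

theorem quarter_le_of_one_le_sqrt_hessBilin (hMconv : Convex ℝ M) (hconv : ConvexOn ℝ M f)
    (hz : z ∈ M) (hmin : ∀ x ∈ M, f z ≤ f x) (hfz : f z = 0)
    (hnear : ∀ y ∈ M, √(hessBilin f z (y - z) (y - z)) < 1 →
      1 / 4 * hessBilin f z (y - z) (y - z) ≤ f y)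
    (hx : x ∈ M) (hge : 1 ≤ √(hessBilin f z (x - z) (x - z))) :
    1 / 4 ≤ f x := by
  set t := √(hessBilin f z (x - z) (x - z))
  have ht : t ^ 2 = hessBilin f z (x - z) (x - z) :=
    Real.sq_sqrt (Real.sqrt_pos.1 (by linarith)).le
  have hfx : 0 ≤ f x := hfz ▸ hmin x hx
  have hscaled : ∀ r ∈ Ioo (0 : ℝ) 1, r / 4 ≤ f x := by
    intro r hr
    have hmem : r / t ∈ Icc (0 : ℝ) 1 :=
      ⟨by have := hr.1; positivity, (div_le_one (by linarith)).2 (by linarith [hr.2])⟩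
    set y := z + (r / t) • (x - z)
    have hy : y ∈ M := hMconv.add_smul_sub_mem hz hx hmem
    have hQy : hessBilin f z (y - z) (y - z) = r ^ 2 := by
      rw [add_sub_cancel_left, hessBilin_smul, ← ht]
      field_simp
    have hfy : f y ≤ r / t * f x := by
      have := hconv.2 hz hx (sub_nonneg.2 hmem.2) hmem.1 (sub_add_cancel 1 (r / t))
      rw [hfz, smul_zero, zero_add, smul_eq_mul] at this
      have hyc : y = (1 - r / t) • z + (r / t) • x := by module
      rwa [hyc]
    have hnear_y := hnear y hy (by rw [hQy, Real.sqrt_sq hr.1.le]; exact hr.2)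
    rw [hQy] at hnear_y
    have : r / t * f x ≤ r * f x :=
      mul_le_mul_of_nonneg_right (div_le_self hr.1.le hge) hfx
    nlinarith [hr.1]
  refine le_of_forall_lt_imp_le_of_dense fun c hc => ?_
  rcases le_or_gt c 0 with hc0 | hc0
  · exact hc0.trans hfx
  · simpa using hscaled (4 * c) ⟨by linarith, by linarith⟩

end LocalNormBounds

theorem stmt_8_general (n : ℕ) (M : Set (Fin n → ℝ)) (hM : IsOpen M) (hMconv : Convex ℝ M)
    (f : (Fin n → ℝ) → ℝ)
    (hf : ∀ x ∈ M, ContDiffAt ℝ 3 f x)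
    (hconv : ConvexOn ℝ M f)
    (hpd : ∀ x ∈ M, ∀ u : Fin n → ℝ, u ≠ 0 → 0 < hessBilin f x u u)
    (hsc : ∀ x ∈ M, ∀ u : Fin n → ℝ,
      |iteratedFDeriv ℝ 3 f x (fun _ => u)| ≤ 2 * hessBilin f x u u ^ ((3 : ℝ) / 2))
    (z : Fin n → ℝ) (hz : z ∈ M) (hmin : ∀ x ∈ M, f z ≤ f x) (hfz : f z = 0) :
    (∀ x ∈ M, Real.sqrt (hessBilin f z (x - z) (x - z)) < 1 →
        (1 / 4) * hessBilin f z (x - z) (x - z) ≤ f x) ∧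
    (∀ x ∈ M, 1 ≤ Real.sqrt (hessBilin f z (x - z) (x - z)) → (1 / 4 : ℝ) ≤ f x) := by
  have hnear := fun x hx => quarter_hessBilin_le hM hMconv hf hpd hsc hz hmin hfz (x := x) hx
  exact ⟨hnear, fun x hx => quarter_le_of_one_le_sqrt_hessBilin hMconv hconv hz hmin hfz hnear hx⟩

/-- Let `f` be self-concordant on an open convex `M ⊆ ℝⁿ` with minimizer
`z ∈ M` and `f(z) = 0`, and let `‖u‖_z = √(D²f_z[u,u])` be the local norm at `z`. Then
`f(x) ≥ ¼‖x-z‖_z²` whenever `‖x-z‖_z < 1`, and `f(x) ≥ ¼` whenever `‖x-z‖_z ≥ 1`. -/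
theorem stmt_8 (n : ℕ) (M : Set (Fin n → ℝ)) (hM : IsOpen M) (hMconv : Convex ℝ M)
    (f : (Fin n → ℝ) → ℝ)
    (hf : ∀ x ∈ M, ContDiffAt ℝ 3 f x)
    (hconv : ConvexOn ℝ M f)
    (hpd : ∀ x ∈ M, ∀ u : Fin n → ℝ, u ≠ 0 → 0 < hessBilin f x u u)
    (hsc : ∀ x ∈ M, ∀ u : Fin n → ℝ,
      |iteratedFDeriv ℝ 3 f x (fun _ => u)| ≤ 2 * hessBilin f x u u ^ ((3 : ℝ) / 2))
    (hdikin : ∀ x ∈ M, ∀ y : Fin n → ℝ,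
      Real.sqrt (hessBilin f x (y - x) (y - x)) < 1 → y ∈ M)
    (z : Fin n → ℝ) (hz : z ∈ M) (hmin : ∀ x ∈ M, f z ≤ f x) (hfz : f z = 0) :
    (∀ x ∈ M, Real.sqrt (hessBilin f z (x - z) (x - z)) < 1 →
        (1 / 4) * hessBilin f z (x - z) (x - z) ≤ f x) ∧
    (∀ x ∈ M, 1 ≤ Real.sqrt (hessBilin f z (x - z) (x - z)) → (1 / 4 : ℝ) ≤ f x) :=
  stmt_8_general n M hM hMconv f hf hconv hpd hsc z hz hmin hfz
end

section
/- Let f be self-concordant on an open convex set M ⊆ ℝⁿ, let x ∈ M and let q_x be the second-order Taylor expansion of f at x. Then for all y with ‖y - x‖_x < 1, one has |f(y) - q_x(y)| ≤ ‖y - x‖_x³ / (3(1 - ‖y - x‖_x)). -/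
open Real Set

lemma neg_log_one_sub_sub_le {r : ℝ} (h₀ : 0 ≤ r) (h₁ : r < 1) :
    -log (1 - r) - r - r ^ 2 / 2 ≤ r ^ 3 / (3 * (1 - r)) := by
  have hlog := (hasSum_nat_add_iff' 2).mpr
    (hasSum_pow_div_log_of_abs_lt_one (abs_lt.mpr ⟨by linarith, h₁⟩))
  have hgeom := (hasSum_geometric_of_lt_one h₀ h₁).mul_left (r ^ 3 / 3)
  have hsum : ∑ i ∈ Finset.range 2, r ^ (i + 1) / (i + 1 : ℝ) = r + r ^ 2 / 2 := by
    norm_num [Finset.sum_range_succ]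
  have hle := hasSum_le (fun n => ?_) hlog hgeom
  · rw [div_eq_mul_inv _ (3 * _), mul_inv]
    linarith
  · rw [show n + 2 + 1 = 3 + n by ring, pow_add, ← div_mul_eq_mul_div]
    push_cast
    gcongr
    linarith [n.cast_nonneg (α := ℝ)]

lemma abs_sub_le_sub_of_abs_deriv_le {F F' G G' : ℝ → ℝ} {a b : ℝ} (hab : a ≤ b)
    (hF : ∀ t ∈ Icc a b, HasDerivAt F (F' t) t) (hG : ∀ t ∈ Icc a b, HasDerivAt G (G' t) t)
    (hbound : ∀ t ∈ Icc a b, |F' t| ≤ G' t) : |F b - F a| ≤ G b - G a := by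
  refine image_norm_le_of_norm_deriv_right_le_deriv_boundary' (f := fun t => F t - F a)
    (B := fun t => G t - G a) ?_ (fun t ht => ?_) (by simp) ?_ (fun t ht => ?_)
    (fun t ht => hbound t (Ico_subset_Icc_self ht)) (right_mem_Icc.mpr hab)
  · exact fun t ht => ((hF t ht).sub_const _).continuousAt.continuousWithinAt
  · exact ((hF t (Ico_subset_Icc_self ht)).sub_const _).hasDerivWithinAt
  · exact fun t ht => ((hG t ht).sub_const _).continuousAt.continuousWithinAt
  · exact ((hG t (Ico_subset_Icc_self ht)).sub_const _).hasDerivWithinAt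

lemma abs_sub_taylor_two_le {φ₀ φ₁ φ₂ φ₃ G G' : ℝ → ℝ}
    (h₀ : ∀ t ∈ Icc (0 : ℝ) 1, HasDerivAt φ₀ (φ₁ t) t)
    (h₁ : ∀ t ∈ Icc (0 : ℝ) 1, HasDerivAt φ₁ (φ₂ t) t)
    (h₂ : ∀ t ∈ Icc (0 : ℝ) 1, HasDerivAt φ₂ (φ₃ t) t)
    (hG : ∀ t ∈ Icc (0 : ℝ) 1, HasDerivAt G (G' t) t)
    (hbound : ∀ t ∈ Icc (0 : ℝ) 1, (1 - t) ^ 2 / 2 * |φ₃ t| ≤ G' t) :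
    |φ₀ 1 - (φ₀ 0 + φ₁ 0 + φ₂ 0 / 2)| ≤ G 1 - G 0 := by
  -- the second-order Taylor polynomial of `φ₀` at `t`, evaluated at `1`
  set P : ℝ → ℝ := fun t => φ₀ t + (1 - t) * φ₁ t + (1 - t) ^ 2 / 2 * φ₂ t
  have hP : ∀ t ∈ Icc (0 : ℝ) 1, HasDerivAt P ((1 - t) ^ 2 / 2 * φ₃ t) t := by
    intro t ht
    have hlin : HasDerivAt (fun s : ℝ => 1 - s) (-1) t := by
      simpa using (hasDerivAt_id t).const_sub 1
    refine (show HasDerivAt P _ t from ((h₀ t ht).add (hlin.mul (h₁ t ht))).add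
      (((hlin.fun_pow 2).div_const 2).mul (h₂ t ht))).congr_deriv ?_
    push_cast
    ring
  convert abs_sub_le_sub_of_abs_deriv_le zero_le_one hP hG (fun t ht => ?_) using 3
  · simp only [P]
    ring
  · simp only [P]
    ring
  · rw [abs_mul, abs_of_nonneg (by positivity : (0 : ℝ) ≤ (1 - t) ^ 2 / 2)]
    exact hbound t ht

/-- An antiderivative of `r ^ 3 * (1 - t) ^ 2 / (1 - t * r) ^ 3`, found by expanding along
`r * (1 - t) = (1 - t * r) - (1 - r)`. -/
noncomputable def taylorMajorant (r t : ℝ) : ℝ :=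
  -log (1 - t * r) - 2 * (1 - r) / (1 - t * r) + (1 - r) ^ 2 / (2 * (1 - t * r) ^ 2)

lemma hasDerivAt_taylorMajorant {r t : ℝ} (htr : t * r < 1) :
    HasDerivAt (taylorMajorant r) (r ^ 3 * (1 - t) ^ 2 / (1 - t * r) ^ 3) t := by
  have hpos : 0 < 1 - t * r := by linarith
  have hlin : HasDerivAt (fun s : ℝ => 1 - s * r) (-r) t := by
    simpa using ((hasDerivAt_id t).mul_const r).const_sub 1
  have hsq := (hlin.fun_pow 2).const_mul 2
  refine (show HasDerivAt (taylorMajorant r) _ t from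
    ((hlin.log hpos.ne').neg.sub ((hasDerivAt_const t (2 * (1 - r))).div hlin hpos.ne')).add
    ((hasDerivAt_const t ((1 - r) ^ 2)).div hsq (by positivity))).congr_deriv ?_
  push_cast
  field_simp
  ring

lemma taylorMajorant_one_sub_zero {r : ℝ} (hr : r ≠ 1) :
    taylorMajorant r 1 - taylorMajorant r 0 = -log (1 - r) - r - r ^ 2 / 2 := by
  have : 1 - r ≠ 0 := sub_ne_zero.mpr hr.symm
  simp only [taylorMajorant, one_mul, zero_mul, sub_zero, log_one]
  field_simp
  ring

lemma rpow_three_halves_eq_sqrt_pow {x : ℝ} (hx : 0 ≤ x) : x ^ ((3 : ℝ) / 2) = √x ^ 3 := by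
  rw [rpow_div_two_eq_sqrt _ hx, rpow_ofNat]

section SelfConcordant

variable {ψ ψ' : ℝ → ℝ}

lemma inv_sqrt_sub_le_of_abs_deriv_le (hψ : ∀ t ∈ Icc (0 : ℝ) 1, HasDerivAt ψ (ψ' t) t)
    (hpos : ∀ t ∈ Icc (0 : ℝ) 1, 0 < ψ t)
    (hsc : ∀ t ∈ Icc (0 : ℝ) 1, |ψ' t| ≤ 2 * ψ t ^ ((3 : ℝ) / 2)) {t : ℝ} (ht : t ∈ Icc 0 1) :
    (√(ψ 0))⁻¹ - t ≤ (√(ψ t))⁻¹ := by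
  have hsub : Icc 0 t ⊆ Icc (0 : ℝ) 1 := Icc_subset_Icc_right ht.2
  have hle := abs_sub_le_sub_of_abs_deriv_le ht.1 (F := fun s => (√(ψ s))⁻¹) (G := id)
    (fun s hs => ((hasDerivAt_sqrt (hpos s (hsub hs)).ne').comp s (hψ s (hsub hs))).inv
      (sqrt_pos.mpr (hpos s (hsub hs))).ne')
    (fun s _ => hasDerivAt_id s) (fun s hs => ?_)
  · simp only [id, sub_zero] at hle
    linarith [neg_abs_le ((√(ψ t))⁻¹ - (√(ψ 0))⁻¹)]
  · have hsqrt : 0 < √(ψ s) := sqrt_pos.mpr (hpos s (hsub hs))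
    have hbound := hsc s (hsub hs)
    rw [rpow_three_halves_eq_sqrt_pow (hpos s (hsub hs)).le] at hbound
    rw [Function.comp_apply, abs_div, abs_neg, abs_mul,
      abs_of_pos (by positivity : 0 < 1 / (2 * √(ψ s))),
      abs_of_pos (by positivity : 0 < √(ψ s) ^ 2), div_le_one (by positivity)]
    field_simp
    nlinarith

lemma sqrt_le_div_one_sub_mul (hψ : ∀ t ∈ Icc (0 : ℝ) 1, HasDerivAt ψ (ψ' t) t)
    (hpos : ∀ t ∈ Icc (0 : ℝ) 1, 0 < ψ t)
    (hsc : ∀ t ∈ Icc (0 : ℝ) 1, |ψ' t| ≤ 2 * ψ t ^ ((3 : ℝ) / 2)) {t : ℝ} (ht : t ∈ Icc 0 1)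
    (htr : t * √(ψ 0) < 1) : √(ψ t) ≤ √(ψ 0) / (1 - t * √(ψ 0)) := by
  have hr : 0 < √(ψ 0) := sqrt_pos.mpr (hpos 0 (left_mem_Icc.mpr zero_le_one))
  have hinv := inv_sqrt_sub_le_of_abs_deriv_le hψ hpos hsc ht
  rw [show (√(ψ 0))⁻¹ - t = (1 - t * √(ψ 0)) / √(ψ 0) by field_simp] at hinv
  rw [← inv_div, ← inv_inv √(ψ t)]
  exact inv_anti₀ (div_pos (by linarith) hr) hinv

end SelfConcordant

theorem abs_sub_taylor_two_le_of_selfConcordant {φ₀ φ₁ φ₂ φ₃ : ℝ → ℝ}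
    (h₀ : ∀ t ∈ Icc (0 : ℝ) 1, HasDerivAt φ₀ (φ₁ t) t)
    (h₁ : ∀ t ∈ Icc (0 : ℝ) 1, HasDerivAt φ₁ (φ₂ t) t)
    (h₂ : ∀ t ∈ Icc (0 : ℝ) 1, HasDerivAt φ₂ (φ₃ t) t)
    (hpos : ∀ t ∈ Icc (0 : ℝ) 1, 0 < φ₂ t)
    (hsc : ∀ t ∈ Icc (0 : ℝ) 1, |φ₃ t| ≤ 2 * φ₂ t ^ ((3 : ℝ) / 2)) (hr : √(φ₂ 0) < 1) :
    |φ₀ 1 - (φ₀ 0 + φ₁ 0 + φ₂ 0 / 2)| ≤ √(φ₂ 0) ^ 3 / (3 * (1 - √(φ₂ 0))) := by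
  set r := √(φ₂ 0)
  have hr₀ : 0 ≤ r := sqrt_nonneg _
  have htr : ∀ t ∈ Icc (0 : ℝ) 1, t * r < 1 := fun t ht =>
    (mul_le_of_le_one_left hr₀ ht.2).trans_lt hr
  have hbound : ∀ t ∈ Icc (0 : ℝ) 1,
      (1 - t) ^ 2 / 2 * |φ₃ t| ≤ r ^ 3 * (1 - t) ^ 2 / (1 - t * r) ^ 3 := by
    intro t ht
    have hφ₃ : |φ₃ t| ≤ 2 * (r / (1 - t * r)) ^ 3 :=
      calc |φ₃ t| ≤ 2 * φ₂ t ^ ((3 : ℝ) / 2) := hsc t ht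
        _ = 2 * √(φ₂ t) ^ 3 := by rw [rpow_three_halves_eq_sqrt_pow (hpos t ht).le]
        _ ≤ 2 * (r / (1 - t * r)) ^ 3 := by
          gcongr
          exact sqrt_le_div_one_sub_mul h₂ hpos hsc ht (htr t ht)
    calc (1 - t) ^ 2 / 2 * |φ₃ t| ≤ (1 - t) ^ 2 / 2 * (2 * (r / (1 - t * r)) ^ 3) := by gcongr
      _ = r ^ 3 * (1 - t) ^ 2 / (1 - t * r) ^ 3 := by rw [div_pow]; ring
  calc |φ₀ 1 - (φ₀ 0 + φ₁ 0 + φ₂ 0 / 2)|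
      ≤ taylorMajorant r 1 - taylorMajorant r 0 :=
        abs_sub_taylor_two_le h₀ h₁ h₂ (fun t ht => hasDerivAt_taylorMajorant (htr t ht)) hbound
    _ = -log (1 - r) - r - r ^ 2 / 2 := taylorMajorant_one_sub_zero hr.ne
    _ ≤ r ^ 3 / (3 * (1 - r)) := neg_log_one_sub_sub_le hr₀ hr

lemma hasDerivAt_iteratedFDeriv_add_smul {E F : Type*} [NormedAddCommGroup E] [NormedSpace ℝ E]
    [NormedAddCommGroup F] [NormedSpace ℝ F] {f : E → F} {x v : E} {t : ℝ} {k : ℕ}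
    (hf : ContDiffAt ℝ (k + 1) f (x + t • v)) :
    HasDerivAt (fun s : ℝ => iteratedFDeriv ℝ k f (x + s • v) (fun _ => v))
      (iteratedFDeriv ℝ (k + 1) f (x + t • v) (fun _ => v)) t := by
  have hline : HasDerivAt (fun s : ℝ => x + s • v) v t := by
    simpa using ((hasDerivAt_id t).smul_const v).const_add x
  have hdiff : DifferentiableAt ℝ (iteratedFDeriv ℝ k f) (x + t • v) :=
    (hf.iteratedFDeriv_right (m := 1) (add_comm _ _).le).differentiableAt (by norm_num)
  rw [iteratedFDeriv_succ_apply_left]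
  exact (ContinuousMultilinearMap.apply ℝ (fun _ : Fin k => E) F _).hasFDerivAt.comp_hasDerivAt t
    (hdiff.hasFDerivAt.comp_hasDerivAt t hline)

section Hessian

variable {n : ℕ} (f : (Fin n → ℝ) → ℝ) (x u : Fin n → ℝ)

lemma hessBilin_self : hessBilin f x u u = iteratedFDeriv ℝ 2 f x (fun _ => u) := by
  unfold hessBilin
  congr
  ext i
  fin_cases i <;> rfl

lemma hessBilin_smul_smul (t : ℝ) :
    hessBilin f x (t • u) (t • u) = t ^ 2 * hessBilin f x u u := by
  rw [hessBilin_self, hessBilin_self,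
    show (fun _ => t • u) = fun i : Fin 2 => (fun _ => t) i • (fun _ => u) i from rfl,
    ContinuousMultilinearMap.map_smul_univ]
  simp [sq]

end Hessian

theorem stmt_9_general (n : ℕ) (M : Set (Fin n → ℝ))
    (f : (Fin n → ℝ) → ℝ)
    (hf : ∀ x ∈ M, ContDiffAt ℝ 3 f x)
    (hpd : ∀ x ∈ M, ∀ u : Fin n → ℝ, u ≠ 0 → 0 < hessBilin f x u u)
    (hsc : ∀ x ∈ M, ∀ u : Fin n → ℝ,
      |iteratedFDeriv ℝ 3 f x (fun _ => u)| ≤ 2 * hessBilin f x u u ^ ((3 : ℝ) / 2))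
    (hdikin : ∀ x ∈ M, ∀ y : Fin n → ℝ,
      Real.sqrt (hessBilin f x (y - x) (y - x)) < 1 → y ∈ M) :
    ∀ x ∈ M, ∀ y : Fin n → ℝ,
      Real.sqrt (hessBilin f x (y - x) (y - x)) < 1 →
      |f y - (f x + fderiv ℝ f x (y - x) + (1 / 2) * hessBilin f x (y - x) (y - x))|
        ≤ Real.sqrt (hessBilin f x (y - x) (y - x)) ^ 3
            / (3 * (1 - Real.sqrt (hessBilin f x (y - x) (y - x)))) := by
  intro x hx y hy
  obtain ⟨v, rfl⟩ : ∃ v, y = x + v := ⟨y - x, (add_sub_cancel x y).symm⟩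
  rw [add_sub_cancel_left] at hy ⊢
  obtain rfl | hv := eq_or_ne v 0
  · simp [hessBilin_self, (iteratedFDeriv ℝ 2 f x).map_coord_zero (m := fun _ => 0) 0 rfl]
  have hseg : ∀ t ∈ Icc (0 : ℝ) 1, x + t • v ∈ M := fun t ht => hdikin x hx _ <| by
    rw [add_sub_cancel_left, hessBilin_smul_smul, sqrt_mul (sq_nonneg t), sqrt_sq ht.1]
    exact (mul_le_of_le_one_left (sqrt_nonneg _) ht.2).trans_lt hy
  set φ : ℕ → ℝ → ℝ := fun k t => iteratedFDeriv ℝ k f (x + t • v) (fun _ => v)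
  have hφ : ∀ k ≤ 2, ∀ t ∈ Icc (0 : ℝ) 1, HasDerivAt (φ k) (φ (k + 1) t) t := fun k hk t ht =>
    hasDerivAt_iteratedFDeriv_add_smul
      ((hf _ (hseg t ht)).of_le (by exact_mod_cast (by omega : k + 1 ≤ 3)))
  have key := abs_sub_taylor_two_le_of_selfConcordant (hφ 0 (by norm_num)) (hφ 1 (by norm_num))
    (hφ 2 le_rfl) (fun t ht => by simpa [φ, hessBilin_self] using hpd _ (hseg t ht) v hv)
    (fun t ht => by simpa [φ, hessBilin_self] using hsc _ (hseg t ht) v)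
    (by simpa [φ, hessBilin_self] using hy)
  simpa [φ, hessBilin_self, iteratedFDeriv_one_apply, div_eq_inv_mul] using key

/-- For `f` self-concordant on an open convex `M ⊆ ℝⁿ`, `x ∈ M`, and
`q_x` the second-order Taylor expansion of `f` at `x`, if `‖y-x‖_x < 1` then
`|f(y) - q_x(y)| ≤ ‖y-x‖_x³ / (3(1 - ‖y-x‖_x))`. -/
theorem stmt_9 (n : ℕ) (M : Set (Fin n → ℝ)) (hM : IsOpen M) (hMconv : Convex ℝ M)
    (f : (Fin n → ℝ) → ℝ)
    (hf : ∀ x ∈ M, ContDiffAt ℝ 3 f x)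
    (hconv : ConvexOn ℝ M f)
    (hpd : ∀ x ∈ M, ∀ u : Fin n → ℝ, u ≠ 0 → 0 < hessBilin f x u u)
    (hsc : ∀ x ∈ M, ∀ u : Fin n → ℝ,
      |iteratedFDeriv ℝ 3 f x (fun _ => u)| ≤ 2 * hessBilin f x u u ^ ((3 : ℝ) / 2))
    (hdikin : ∀ x ∈ M, ∀ y : Fin n → ℝ,
      Real.sqrt (hessBilin f x (y - x) (y - x)) < 1 → y ∈ M) :
    ∀ x ∈ M, ∀ y : Fin n → ℝ,
      Real.sqrt (hessBilin f x (y - x) (y - x)) < 1 →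
      |f y - (f x + fderiv ℝ f x (y - x) + (1 / 2) * hessBilin f x (y - x) (y - x))|
        ≤ Real.sqrt (hessBilin f x (y - x) (y - x)) ^ 3
            / (3 * (1 - Real.sqrt (hessBilin f x (y - x) (y - x)))) :=
  stmt_9_general n M f hf hpd hsc hdikin
end

section
/- Let f be self-concordant on M ⊆ ℝⁿ and x, y ∈ M with r := ‖y - x‖_x < 1. Then the Hessians satisfy (1-r)² ∇²f(x) ⪯ ∇²f(y) ⪯ (1-r)^{-2} ∇²f(x) in the Loewner order. -/
open Set

theorem exists_polar_trisection (p q : ℝ) :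
    ∃ c s : ℝ, c ^ 2 + s ^ 2 = 1 ∧ p = √(p ^ 2 + q ^ 2) * (4 * c ^ 3 - 3 * c) ∧
      q = √(p ^ 2 + q ^ 2) * (3 * s - 4 * s ^ 3) := by
  set z : ℂ := ⟨p, q⟩
  have hz : ‖z‖ = √(p ^ 2 + q ^ 2) := by
    rw [Complex.norm_def, Complex.normSq_mk]; ring_nf
  refine ⟨Real.cos (z.arg / 3), Real.sin (z.arg / 3), Real.cos_sq_add_sin_sq _, ?_, ?_⟩
  · rw [← Real.cos_three_mul, mul_div_cancel₀ _ three_ne_zero, ← hz,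
      Complex.norm_mul_cos_arg]
  · rw [← Real.sin_three_mul, mul_div_cancel₀ _ three_ne_zero, ← hz,
      Complex.norm_mul_sin_arg]

theorem abs_mul_add_mul_le_of_abs_cubic_le {A B C D K : ℝ}
    (hK : ∀ c s : ℝ, c ^ 2 + s ^ 2 = 1 →
      |c ^ 3 * A + 3 * c ^ 2 * s * B + 3 * c * s ^ 2 * C + s ^ 3 * D| ≤ K) (p q : ℝ) :
    |p * A + q * B| ≤ K * √(p ^ 2 + q ^ 2) := by
  obtain ⟨c, s, hcs, hp, hq⟩ := exists_polar_trisection p q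
  set ρ := √(p ^ 2 + q ^ 2)
  set φ : ℝ → ℝ → ℝ := fun c s ↦
    c ^ 3 * A + 3 * c ^ 2 * s * B + 3 * c * s ^ 2 * C + s ^ 3 * D
  -- Nodes: `(c, s)` rotated by `0`, `2π/3`, `4π/3`. Weights: the Fejér-type kernel
  -- `(sin 3θ / (3 sin θ))² = ((4 cos² θ - 1) / 3)²` centred at `θ = 0`.
  set w : ℝ → ℝ := fun c ↦ (4 * c ^ 2 - 1) ^ 2 / 9
  set t := √3
  have ht : t ^ 2 = 3 := Real.sq_sqrt (by norm_num)
  set c₁ := (-c - t * s) / 2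
  set s₁ := (t * c - s) / 2
  set c₂ := (-c + t * s) / 2
  set s₂ := (-t * c - s) / 2
  have hcs₁ : c₁ ^ 2 + s₁ ^ 2 = 1 := by grind
  have hcs₂ : c₂ ^ 2 + s₂ ^ 2 = 1 := by grind
  have hw : w c + w c₁ + w c₂ = 1 := by grind
  have hquad : w c * φ c s + w c₁ * φ c₁ s₁ + w c₂ * φ c₂ s₂ =
      (4 * c ^ 3 - 3 * c) * A + (3 * s - 4 * s ^ 3) * B := by grind
  have hφ := abs_le.1 (hK c s hcs)
  have hφ₁ := abs_le.1 (hK c₁ s₁ hcs₁)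
  have hφ₂ := abs_le.1 (hK c₂ s₂ hcs₂)
  have hw₀ : 0 ≤ w c := by positivity
  have hw₁ : 0 ≤ w c₁ := by positivity
  have hw₂ : 0 ≤ w c₂ := by positivity
  have hmean : |w c * φ c s + w c₁ * φ c₁ s₁ + w c₂ * φ c₂ s₂| ≤ K := by
    rw [abs_le]; constructor <;> nlinarith [mul_le_mul_of_nonneg_left hφ.1 hw₀]
  have hpq :
      p * A + q * B = ρ * (w c * φ c s + w c₁ * φ c₁ s₁ + w c₂ * φ c₂ s₂) := by
    rw [hquad]; linear_combination A * hp + B * hq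
  rw [hpq, abs_mul, abs_of_nonneg (Real.sqrt_nonneg _), mul_comm K]
  exact mul_le_mul_of_nonneg_left hmean (Real.sqrt_nonneg _)

section SymmetricForms

variable {E : Type*} [NormedAddCommGroup E] [NormedSpace ℝ E]
  {P : E →L[ℝ] E →L[ℝ] ℝ} {T : E →L[ℝ] E →L[ℝ] E →L[ℝ] ℝ}

theorem apply_self_nonneg_of_pos (hPpos : ∀ u ≠ 0, 0 < P u u) (w : E) : 0 ≤ P w w := by
  rcases eq_or_ne w 0 with rfl | hw
  · simp
  · exact (hPpos w hw).le

theorem trilinear_apply_add_smul_self (hT₁₂ : ∀ a b c, T a b c = T b a c)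
    (hT₂₃ : ∀ a b c, T a b c = T a c b) (c s : ℝ) (u v : E) :
    T (c • u + s • v) (c • u + s • v) (c • u + s • v) =
      c ^ 3 * T u u u + 3 * c ^ 2 * s * T v u u + 3 * c * s ^ 2 * T u v v + s ^ 3 * T v v v := by
  simp only [map_add, map_smul, add_apply, smul_apply, smul_eq_mul]
  rw [hT₂₃ u u v, hT₁₂ u v u, hT₁₂ v u v, hT₂₃ v v u, hT₁₂ v u v]
  ring

theorem abs_trilinear_le_of_apply_self_eq_one (hP : ∀ u v, P u v = P v u)
    (hPpos : ∀ u ≠ 0, 0 < P u u) (hT₁₂ : ∀ a b c, T a b c = T b a c)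
    (hT₂₃ : ∀ a b c, T a b c = T a c b)
    (hT : ∀ w, |T w w w| ≤ 2 * P w w ^ ((3 : ℝ) / 2)) {u : E} (hu : P u u = 1) (h : E) :
    |T h u u| ≤ 2 * √(P h h) := by
  have hPnonneg := apply_self_nonneg_of_pos hPpos
  set β := P h u
  set w := h - β • u
  have hwu : P w u = 0 := by simp [w, β, hu]
  set η := √(P w w)
  obtain ⟨v, hwv, hvv, huv⟩ : ∃ v, w = η • v ∧ P v v ≤ 1 ∧ P u v = 0 := by
    by_cases hw : w = 0
    · exact ⟨0, by simp [hw], by simp, by simp⟩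
    have hη : η ≠ 0 := (Real.sqrt_pos.2 (hPpos w hw)).ne'
    refine ⟨η⁻¹ • w, (smul_inv_smul₀ hη w).symm, ?_, by simp [hP u w, hwu]⟩
    have hη2 : η ^ 2 = P w w := Real.sq_sqrt (hPnonneg w)
    simp only [map_smul, smul_apply, smul_eq_mul, ← hη2]
    exact le_of_eq (by field_simp)
  have hcircle : ∀ c s : ℝ, c ^ 2 + s ^ 2 = 1 →
      |c ^ 3 * T u u u + 3 * c ^ 2 * s * T v u u + 3 * c * s ^ 2 * T u v v + s ^ 3 * T v v v|
        ≤ 2 := by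
    intro c s hcs
    rw [← trilinear_apply_add_smul_self hT₁₂ hT₂₃]
    have hP1 : P (c • u + s • v) (c • u + s • v) ≤ 1 := by
      simp only [map_add, map_smul, add_apply, smul_apply, smul_eq_mul, hu, huv, hP v u]
      nlinarith
    calc _ ≤ 2 * P (c • u + s • v) (c • u + s • v) ^ ((3 : ℝ) / 2) := hT _
      _ ≤ 2 := by
        have := Real.rpow_le_one (hPnonneg _) hP1 (by norm_num : (0 : ℝ) ≤ 3 / 2)
        linarith
  have hPhh : P h h = β ^ 2 + η ^ 2 := by
    rw [Real.sq_sqrt (hPnonneg w), show h = β • u + w by simp [w]]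
    simp only [map_add, map_smul, add_apply, smul_apply, smul_eq_mul, hu, hwu, hP u w]
    ring
  have hThuu : T h u u = β * T u u u + η * T v u u := by
    rw [show h = β • u + η • v by rw [← hwv]; simp [w]]
    simp
  rw [hThuu, hPhh]
  exact abs_mul_add_mul_le_of_abs_cubic_le hcircle β η

theorem abs_trilinear_le (hP : ∀ u v, P u v = P v u)
    (hPpos : ∀ u ≠ 0, 0 < P u u) (hT₁₂ : ∀ a b c, T a b c = T b a c)
    (hT₂₃ : ∀ a b c, T a b c = T a c b)
    (hT : ∀ w, |T w w w| ≤ 2 * P w w ^ ((3 : ℝ) / 2)) (h u : E) :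
    |T h u u| ≤ 2 * √(P h h) * P u u := by
  rcases eq_or_ne u 0 with rfl | hu
  · simp
  set ν := √(P u u)
  have hν : 0 < ν := Real.sqrt_pos.2 (hPpos u hu)
  have hν2 : ν ^ 2 = P u u := Real.sq_sqrt (hPpos u hu).le
  have hunit : P (ν⁻¹ • u) (ν⁻¹ • u) = 1 := by
    simp only [map_smul, smul_apply, smul_eq_mul, ← hν2]
    field_simp
  have hT_scale : T h u u = ν ^ 2 * T h (ν⁻¹ • u) (ν⁻¹ • u) := by
    simp only [map_smul, smul_apply, smul_eq_mul]
    field_simp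
  rw [hT_scale, abs_mul, abs_of_pos (by positivity), ← hν2, mul_comm (ν ^ 2)]
  exact mul_le_mul_of_nonneg_right
    (abs_trilinear_le_of_apply_self_eq_one hP hPpos hT₁₂ hT₂₃ hT hunit h) (by positivity)

end SymmetricForms

section Derivatives

variable {E F : Type*} [NormedAddCommGroup E] [NormedSpace ℝ E]
  [NormedAddCommGroup F] [NormedSpace ℝ F] {f : E → F} {x : E}

theorem iteratedFDeriv_three_apply (m : Fin 3 → E) :
    iteratedFDeriv ℝ 3 f x m = fderiv ℝ (fderiv ℝ (fderiv ℝ f)) x (m 0) (m 1) (m 2) := by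
  rw [iteratedFDeriv_succ_apply_right, iteratedFDeriv_two_apply]
  rfl

theorem hasDerivAt_fderiv_fderiv_apply_add_smul {h : E} {t : ℝ}
    (hf : DifferentiableAt ℝ (fderiv ℝ (fderiv ℝ f)) (x + t • h)) (u v : E) :
    HasDerivAt (fun s : ℝ ↦ fderiv ℝ (fderiv ℝ f) (x + s • h) u v)
      (fderiv ℝ (fderiv ℝ (fderiv ℝ f)) (x + t • h) h u v) t := by
  have hline : HasDerivAt (fun s : ℝ ↦ x + s • h) h t := by
    simpa using ((hasDerivAt_id t).smul_const h).const_add x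
  have hD2uv := (hf.hasFDerivAt.clm_apply (hasFDerivAt_const u _)).clm_apply
    (hasFDerivAt_const v _)
  simpa [Function.comp_def] using hD2uv.comp_hasDerivAt t hline

theorem ContDiffAt.differentiableAt_fderiv_fderiv (hf : ContDiffAt ℝ 3 f x) :
    DifferentiableAt ℝ (fderiv ℝ (fderiv ℝ f)) x :=
  ((hf.fderiv_right (m := 2) (by norm_num)).fderiv_right (m := 1) (by norm_num)).differentiableAt
    (by norm_num)

theorem ContDiffAt.fderiv_fderiv_comm (hf : ContDiffAt ℝ 2 f x) (u v : E) :
    fderiv ℝ (fderiv ℝ f) x u v = fderiv ℝ (fderiv ℝ f) x v u :=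
  hf.isSymmSndFDerivAt (by simp) u v

theorem ContDiffAt.fderiv_fderiv_fderiv_comm₁₂ (hf : ContDiffAt ℝ 3 f x) (a b c : E) :
    fderiv ℝ (fderiv ℝ (fderiv ℝ f)) x a b c = fderiv ℝ (fderiv ℝ (fderiv ℝ f)) x b a c := by
  rw [(hf.fderiv_right (m := 2) (by norm_num)).fderiv_fderiv_comm a b]

theorem ContDiffAt.fderiv_fderiv_fderiv_comm₂₃ (hf : ContDiffAt ℝ 3 f x) (a b c : E) :
    fderiv ℝ (fderiv ℝ (fderiv ℝ f)) x a b c = fderiv ℝ (fderiv ℝ (fderiv ℝ f)) x a c b := by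
  have hD : ∀ u v : E, HasDerivAt (fun s : ℝ ↦ fderiv ℝ (fderiv ℝ f) (x + s • a) u v)
      (fderiv ℝ (fderiv ℝ (fderiv ℝ f)) x a u v) 0 := fun u v ↦ by
    simpa using hasDerivAt_fderiv_fderiv_apply_add_smul (t := 0)
      (by simpa using hf.differentiableAt_fderiv_fderiv) u v
  have hnear : ∀ᶠ s : ℝ in nhds 0, ContDiffAt ℝ 2 f (x + s • a) := by
    have : Filter.Tendsto (fun s : ℝ ↦ x + s • a) (nhds 0) (nhds x) :=
      (by fun_prop : Continuous fun s : ℝ ↦ x + s • a).tendsto' 0 x (by simp)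
    exact this.eventually ((hf.eventually (by simp)).mono fun y hy ↦ hy.of_le (by norm_num))
  exact (hD b c).unique ((hD c b).congr_of_eventuallyEq
    (hnear.mono fun s hs ↦ hs.fderiv_fderiv_comm b c))

end Derivatives

theorem sqrt_mul_one_sub_le_of_deriv_le {σ σ' : ℝ → ℝ}
    (hσ : ∀ t ∈ Icc (0 : ℝ) 1, HasDerivAt σ (σ' t) t) (hpos : ∀ t ∈ Icc (0 : ℝ) 1, 0 < σ t)
    (hσ' : ∀ t ∈ Icc (0 : ℝ) 1, σ' t ≤ 2 * σ t ^ ((3 : ℝ) / 2)) {t : ℝ}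
    (ht : t ∈ Icc (0 : ℝ) 1) : √(σ t) * (1 - √(σ 0) * t) ≤ √(σ 0) := by
  have hV : ∀ t ∈ Icc (0 : ℝ) 1, HasDerivAt (fun t ↦ (√(σ t))⁻¹ + t)
      (-(σ' t / (2 * √(σ t))) / √(σ t) ^ 2 + 1) t := fun t ht ↦
    (((hσ t ht).sqrt (hpos t ht).ne').inv (Real.sqrt_pos.2 (hpos t ht)).ne').add
      (hasDerivAt_id t)
  have hV' : ∀ t ∈ interior (Icc (0 : ℝ) 1),
      0 ≤ -(σ' t / (2 * √(σ t))) / √(σ t) ^ 2 + 1 := by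
    intro t ht
    have ht := interior_subset ht
    have hs := Real.sqrt_pos.2 (hpos t ht)
    have h32 : σ t ^ ((3 : ℝ) / 2) = √(σ t) * √(σ t) ^ 2 := by
      rw [Real.sq_sqrt (hpos t ht).le, Real.sqrt_eq_rpow, ← Real.rpow_add_one (hpos t ht).ne']
      norm_num
    have := hσ' t ht
    rw [h32] at this
    have : σ' t / (2 * √(σ t)) / √(σ t) ^ 2 ≤ 1 := by
      rw [div_div, div_le_one (by positivity)]
      linarith
    linarith [neg_div (√(σ t) ^ 2) (σ' t / (2 * √(σ t)))]
  have hmono : MonotoneOn (fun t ↦ (√(σ t))⁻¹ + t) (Icc 0 1) :=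
    monotoneOn_of_hasDerivWithinAt_nonneg (convex_Icc 0 1)
      (fun t ht ↦ (hV t ht).continuousAt.continuousWithinAt)
      (fun t ht ↦ (hV t (interior_subset ht)).hasDerivWithinAt) hV'
  have h0t := hmono (left_mem_Icc.2 zero_le_one) ht ht.1
  have hs0 := Real.sqrt_pos.2 (hpos 0 (left_mem_Icc.2 zero_le_one))
  have hst := Real.sqrt_pos.2 (hpos t ht)
  simp only [add_zero] at h0t
  rw [inv_le_iff_one_le_mul₀ hs0] at h0t
  have := mul_le_mul_of_nonneg_left h0t hst.le
  field_simp at this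
  nlinarith

theorem one_sub_sq_mul_le_of_abs_deriv_mul_le {g g' : ℝ → ℝ} {r : ℝ} (hr1 : r < 1)
    (hg : ∀ t ∈ Icc (0 : ℝ) 1, HasDerivAt g (g' t) t)
    (hbound : ∀ t ∈ Icc (0 : ℝ) 1, |g' t| * (1 - r * t) ≤ 2 * r * g t) :
    (1 - r) ^ 2 * g 0 ≤ g 1 ∧ g 1 ≤ ((1 - r) ^ 2)⁻¹ * g 0 := by
  have hpos : ∀ t ∈ Icc (0 : ℝ) 1, 0 < 1 - r * t := fun t ht ↦ by
    rcases le_total r 0 with hr | hr <;> nlinarith [ht.1, ht.2]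
  have hℓ : ∀ t : ℝ, HasDerivAt (fun t ↦ (1 - r * t) ^ 2) (2 * (1 - r * t) * -r) t := fun t ↦ by
    simpa using (((hasDerivAt_id t).const_mul r).const_sub 1).fun_pow 2
  have hmem0 : (0 : ℝ) ∈ Icc (0 : ℝ) 1 := left_mem_Icc.2 zero_le_one
  have hmem1 : (1 : ℝ) ∈ Icc (0 : ℝ) 1 := right_mem_Icc.2 zero_le_one
  constructor
  · have hquot : ∀ t ∈ Icc (0 : ℝ) 1, HasDerivAt (fun t ↦ g t / (1 - r * t) ^ 2)
        ((g' t * (1 - r * t) ^ 2 - g t * (2 * (1 - r * t) * -r)) / ((1 - r * t) ^ 2) ^ 2) t :=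
      fun t ht ↦ (hg t ht).div (hℓ t) (pow_pos (hpos t ht) 2).ne'
    have hmono : MonotoneOn (fun t ↦ g t / (1 - r * t) ^ 2) (Icc 0 1) := by
      refine monotoneOn_of_hasDerivWithinAt_nonneg (convex_Icc 0 1)
        (fun t ht ↦ (hquot t ht).continuousAt.continuousWithinAt)
        (fun t ht ↦ (hquot t (interior_subset ht)).hasDerivWithinAt) fun t ht ↦ ?_
      have ht := interior_subset ht
      have := hbound t ht
      have := neg_abs_le (g' t)
      have := hpos t ht
      apply div_nonneg _ (by positivity)
      nlinarith
    have := hmono hmem0 hmem1 zero_le_one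
    simp only [mul_zero, sub_zero, one_pow, div_one, mul_one] at this
    rwa [le_div_iff₀ (by nlinarith), mul_comm] at this
  · have hanti : AntitoneOn (fun t ↦ g t * (1 - r * t) ^ 2) (Icc 0 1) := by
      refine antitoneOn_of_hasDerivWithinAt_nonpos (convex_Icc 0 1)
        (fun t ht ↦ ((hg t ht).mul (hℓ t)).continuousAt.continuousWithinAt)
        (fun t ht ↦ ((hg t (interior_subset ht)).mul (hℓ t)).hasDerivWithinAt)
        fun t ht ↦ ?_
      have ht := interior_subset ht
      have := hbound t ht
      have := le_abs_self (g' t)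
      have := hpos t ht
      nlinarith
    have := hanti hmem0 hmem1 zero_le_one
    simp only [mul_zero, sub_zero, one_pow, mul_one] at this
    rwa [← le_div_iff₀ (by nlinarith), div_eq_inv_mul] at this

theorem one_sub_sq_mul_le_of_abs_deriv_le_sqrt_mul {σ σ' g g' : ℝ → ℝ}
    (hσ : ∀ t ∈ Icc (0 : ℝ) 1, HasDerivAt σ (σ' t) t) (hσpos : ∀ t ∈ Icc (0 : ℝ) 1, 0 < σ t)
    (hσ' : ∀ t ∈ Icc (0 : ℝ) 1, σ' t ≤ 2 * σ t ^ ((3 : ℝ) / 2))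
    (hg : ∀ t ∈ Icc (0 : ℝ) 1, HasDerivAt g (g' t) t)
    (hg' : ∀ t ∈ Icc (0 : ℝ) 1, |g' t| ≤ 2 * √(σ t) * g t) (hσ0 : √(σ 0) < 1) :
    (1 - √(σ 0)) ^ 2 * g 0 ≤ g 1 ∧ g 1 ≤ ((1 - √(σ 0)) ^ 2)⁻¹ * g 0 := by
  set r := √(σ 0)
  refine one_sub_sq_mul_le_of_abs_deriv_mul_le hσ0 hg fun t ht ↦ ?_
  have hst : 0 < √(σ t) := Real.sqrt_pos.2 (hσpos t ht)
  have hgt : 0 ≤ g t :=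
    nonneg_of_mul_nonneg_right ((abs_nonneg _).trans (hg' t ht)) (by positivity)
  calc |g' t| * (1 - r * t) ≤ 2 * √(σ t) * g t * (1 - r * t) :=
        mul_le_mul_of_nonneg_right (hg' t ht) (by nlinarith [ht.1, ht.2])
    _ = 2 * g t * (√(σ t) * (1 - r * t)) := by ring
    _ ≤ 2 * g t * r :=
        mul_le_mul_of_nonneg_left (sqrt_mul_one_sub_le_of_deriv_le hσ hσpos hσ' ht)
          (by positivity)
    _ = 2 * r * g t := by ring

theorem stmt_10_general (n : ℕ) (M : Set (Fin n → ℝ)) (hMconv : Convex ℝ M)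
    (f : (Fin n → ℝ) → ℝ)
    (hf : ∀ x ∈ M, ContDiffAt ℝ 3 f x)
    (hpd : ∀ x ∈ M, ∀ u : Fin n → ℝ, u ≠ 0 → 0 < hessBilin f x u u)
    (hsc : ∀ x ∈ M, ∀ u : Fin n → ℝ,
      |iteratedFDeriv ℝ 3 f x (fun _ => u)| ≤ 2 * hessBilin f x u u ^ ((3 : ℝ) / 2)) :
    ∀ x ∈ M, ∀ y ∈ M, ∀ r : ℝ,
      r = Real.sqrt (hessBilin f x (y - x) (y - x)) → r < 1 →
      ∀ u : Fin n → ℝ,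
        (1 - r) ^ 2 * hessBilin f x u u ≤ hessBilin f y u u ∧
        hessBilin f y u u ≤ ((1 - r) ^ 2)⁻¹ * hessBilin f x u u := by
  simp only [hessBilin, iteratedFDeriv_two_apply, iteratedFDeriv_three_apply,
    Matrix.cons_val_zero, Matrix.cons_val_one] at hpd hsc ⊢
  intro x hx y hy r hr hr1 u
  obtain ⟨h, rfl⟩ : ∃ h, y = x + h := ⟨y - x, by abel⟩
  simp only [add_sub_cancel_left] at hr
  rcases eq_or_ne h 0 with rfl | hh
  · simp [hr]
  have hseg : ∀ t ∈ Icc (0 : ℝ) 1, x + t • h ∈ M := fun t ht ↦ hMconv.add_smul_mem hx hy ht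
  have hderiv : ∀ v, ∀ t ∈ Icc (0 : ℝ) 1,
      HasDerivAt (fun s : ℝ ↦ fderiv ℝ (fderiv ℝ f) (x + s • h) v v)
        (fderiv ℝ (fderiv ℝ (fderiv ℝ f)) (x + t • h) h v v) t := fun v t ht ↦
    hasDerivAt_fderiv_fderiv_apply_add_smul (hf _ (hseg t ht)).differentiableAt_fderiv_fderiv v v
  have hmixed : ∀ z ∈ M, ∀ a b, |fderiv ℝ (fderiv ℝ (fderiv ℝ f)) z a b b| ≤
      2 * √(fderiv ℝ (fderiv ℝ f) z a a) * fderiv ℝ (fderiv ℝ f) z b b := fun z hz ↦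
    abs_trilinear_le ((hf z hz).of_le (by norm_num)).fderiv_fderiv_comm (hpd z hz)
      (hf z hz).fderiv_fderiv_fderiv_comm₁₂ (hf z hz).fderiv_fderiv_fderiv_comm₂₃ (hsc z hz)
  simpa [← hr] using one_sub_sq_mul_le_of_abs_deriv_le_sqrt_mul (hderiv h)
    (fun t ht ↦ hpd _ (hseg t ht) h hh) (fun t ht ↦ (le_abs_self _).trans (hsc _ (hseg t ht) h))
    (hderiv u) (fun t ht ↦ hmixed _ (hseg t ht) h u) (by simpa [← hr] using hr1)

/-- Hessian stability. For `f` self-concordant on open convex `M` and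
`x, y ∈ M` with `r = ‖y-x‖_x < 1`, one has
`(1-r)² ∇²f(x) ⪯ ∇²f(y) ⪯ (1-r)⁻² ∇²f(x)` in the Loewner order, i.e. as quadratic
forms. -/
theorem stmt_10 (n : ℕ) (M : Set (Fin n → ℝ)) (hM : IsOpen M) (hMconv : Convex ℝ M)
    (f : (Fin n → ℝ) → ℝ)
    (hf : ∀ x ∈ M, ContDiffAt ℝ 3 f x)
    (hconv : ConvexOn ℝ M f)
    (hpd : ∀ x ∈ M, ∀ u : Fin n → ℝ, u ≠ 0 → 0 < hessBilin f x u u)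
    (hsc : ∀ x ∈ M, ∀ u : Fin n → ℝ,
      |iteratedFDeriv ℝ 3 f x (fun _ => u)| ≤ 2 * hessBilin f x u u ^ ((3 : ℝ) / 2))
    (hdikin : ∀ x ∈ M, ∀ y : Fin n → ℝ,
      Real.sqrt (hessBilin f x (y - x) (y - x)) < 1 → y ∈ M) :
    ∀ x ∈ M, ∀ y ∈ M, ∀ r : ℝ,
      r = Real.sqrt (hessBilin f x (y - x) (y - x)) → r < 1 →
      ∀ u : Fin n → ℝ,
        (1 - r) ^ 2 * hessBilin f x u u ≤ hessBilin f y u u ∧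
        hessBilin f y u u ≤ ((1 - r) ^ 2)⁻¹ * hessBilin f x u u :=
  stmt_10_general n M hMconv f hf hpd hsc
end
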